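/- Let a, b ∈ ℝ² be unit vectors, let p, q ∈ ℝ², and let ℓ > 0 satisfy ℓ |a × b| > ‖p − q‖. Then the segments {p + t a : t ∈ [−ℓ, ℓ]} and {q + s b : s ∈ [−ℓ, ℓ]} intersect; that is, there exist t, s ∈ [−ℓ, ℓ] with p + t a = q + s b. -/

import Mathlib

/-!
By Cramer's rule, `q - p = t • a - s • b` with `t = (q - p) × b / a × b` and
`s = -(a × (q - p)) / a × b`. Since `|u × v| ≤ ‖u‖ ‖v‖` and `a, b` are unit vectors, both numerators
are at most `‖p - q‖ < ℓ |a × b|` in absolute value, so `|t|, |s| ≤ ℓ`.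
-/

/-- The planar cross product `a × b = a₁b₂ − a₂b₁`. -/
def cross (a b : EuclideanSpace ℝ (Fin 2)) : ℝ := a 0 * b 1 - a 1 * b 0

theorem cross_sq_add_inner_sq (u v : EuclideanSpace ℝ (Fin 2)) :
    cross u v ^ 2 + inner ℝ u v ^ 2 = ‖u‖ ^ 2 * ‖v‖ ^ 2 := by
  simp only [EuclideanSpace.norm_sq_eq, PiLp.inner_apply, Fin.sum_univ_two, cross,
    Real.norm_eq_abs, sq_abs, RCLike.inner_apply, conj_trivial]
  ring

theorem abs_cross_le_norm_mul_norm (u v : EuclideanSpace ℝ (Fin 2)) : |cross u v| ≤ ‖u‖ * ‖v‖ :=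
  abs_le_of_sq_le_sq (by nlinarith [cross_sq_add_inner_sq u v, sq_nonneg (inner ℝ u v)])
    (by positivity)

theorem cross_smul_add_cross_smul {a b : EuclideanSpace ℝ (Fin 2)} (v : EuclideanSpace ℝ (Fin 2))
    (hab : cross a b ≠ 0) :
    (cross v b / cross a b) • a + (cross a v / cross a b) • b = v := by
  ext i
  fin_cases i <;>
  · simp only [cross, PiLp.add_apply, PiLp.smul_apply, smul_eq_mul, Fin.zero_eta, Fin.mk_one]
      at hab ⊢
    rw [div_mul_eq_mul_div, div_mul_eq_mul_div, ← add_div, div_eq_iff hab]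
    ring

theorem div_mem_Icc_of_abs_lt_mul_abs {x c ℓ : ℝ} (h : |x| < ℓ * |c|) :
    x / c ∈ Set.Icc (-ℓ) ℓ := by
  have hc : 0 < |c| := (abs_nonneg c).lt_of_ne fun hc ↦ by
    rw [← hc, mul_zero] at h
    exact (abs_nonneg x).not_gt h
  rw [Set.mem_Icc, ← abs_le, abs_div, div_le_iff₀ hc]
  exact h.le

theorem segments_intersect_general
    (a b p q : EuclideanSpace ℝ (Fin 2)) (ha : ‖a‖ = 1) (hb : ‖b‖ = 1)
    (ℓ : ℝ) (h : ‖p - q‖ < ℓ * |cross a b|) :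
    ∃ t ∈ Set.Icc (-ℓ) ℓ, ∃ s ∈ Set.Icc (-ℓ) ℓ, p + t • a = q + s • b := by
  have hab : cross a b ≠ 0 := by
    rintro hab
    rw [hab, abs_zero, mul_zero] at h
    exact (norm_nonneg _).not_gt h
  have hpq : ‖q - p‖ = ‖p - q‖ := norm_sub_rev q p
  have hcramer := cross_smul_add_cross_smul (q - p) hab
  refine ⟨cross (q - p) b / cross a b, ?_, -cross a (q - p) / cross a b, ?_, ?_⟩
  · refine div_mem_Icc_of_abs_lt_mul_abs (lt_of_le_of_lt ?_ h)
    simpa [hb, hpq] using abs_cross_le_norm_mul_norm (q - p) b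
  · refine div_mem_Icc_of_abs_lt_mul_abs (lt_of_le_of_lt ?_ h)
    simpa [ha, hpq] using abs_cross_le_norm_mul_norm a (q - p)
  · rw [neg_div, neg_smul]
    linear_combination (norm := module) hcramer

/-- If `a, b` are unit vectors, `p, q ∈ ℝ²` and `ℓ > 0` satisfies
`ℓ |a × b| > ‖p − q‖`, then the segments `{p + t a : t ∈ [−ℓ,ℓ]}` and
`{q + s b : s ∈ [−ℓ,ℓ]}` intersect. -/
theorem segments_intersect
    (a b p q : EuclideanSpace ℝ (Fin 2)) (ha : ‖a‖ = 1) (hb : ‖b‖ = 1)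
    (ℓ : ℝ) (hℓ : 0 < ℓ) (h : ‖p - q‖ < ℓ * |cross a b|) :
    ∃ t ∈ Set.Icc (-ℓ) ℓ, ∃ s ∈ Set.Icc (-ℓ) ℓ, p + t • a = q + s • b :=
  segments_intersect_general a b p q ha hb ℓ h
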